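/- arXiv:0905.1167 — 3 statements merged into one kernel-verified Lean document; each statement's English description precedes it below -/
import Mathlib

section
/- Let $C \geq 0$ and let $h$ be a real symmetric $n \times n$ matrix such that $h + C I$ is positive semidefinite. Then $\left(\sum_{i,j=1}^n h_{ij}^2\right)^{1/2} \leq \operatorname{tr}(h) + (n + \sqrt{n}) C$. (In particular, if along a mean curvature flow the second fundamental form satisfies $h_{ij} \geq -C$ and its norm $|A|$ is unbounded, then the mean curvature $H = \operatorname{tr}(h)$ is unbounded.) -/
/-- For a positive semidefinite real matrix, each entry squared is bounded by the product of
the corresponding diagonal entries (a 2×2 minor / discriminant argument). -/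
lemma entry_sq_le {n : ℕ} {B : Matrix (Fin n) (Fin n) ℝ} (hB : B.PosSemidef)
    (i j : Fin n) : (B i j) ^ 2 ≤ B i i * B j j := by
  have hsymm : B j i = B i j := by
    simpa using hB.isHermitian.apply i j
  have key : ∀ t : ℝ, 0 ≤ B j j * (t * t) + (2 * B i j) * t + B i i := by
    intro t
    have h2 := hB.dotProduct_mulVec_nonneg ((Pi.single i 1 : Fin n → ℝ) + t • (Pi.single j 1 : Fin n → ℝ))
    simp only [star_trivial, Matrix.mulVec_add, Matrix.mulVec_smul, Matrix.mulVec_single,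
      add_dotProduct, smul_dotProduct, single_dotProduct,
      dotProduct_add, dotProduct_smul, smul_eq_mul, Pi.add_apply,
      Pi.smul_apply, Pi.single_apply, mul_one] at h2
    rcases eq_or_ne i j with rfl | hij
    · simp at h2 ⊢
      nlinarith [h2]
    · simp [hij, hij.symm, hsymm] at h2 ⊢
      nlinarith [h2]
  have h3 := discrim_le_zero key
  rw [discrim] at h3
  nlinarith

/-- If `h` is a real symmetric matrix with `h + C·I` positive semidefinite (`C ≥ 0`), then
the Frobenius norm `|A| = (∑ h_{ij}²)^{1/2}` is bounded by `tr(h) + (n + √n) C`.  In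
particular, a lower bound on the second fundamental form together with unboundedness of
`|A|` forces the mean curvature `H = tr(h)` to be unbounded. -/
theorem frobenius_norm_le_trace_of_lower_bound (n : ℕ) (C : ℝ) (hC : 0 ≤ C)
    (h : Matrix (Fin n) (Fin n) ℝ) (hsymm : h.IsSymm)
    (hpsd : (h + C • (1 : Matrix (Fin n) (Fin n) ℝ)).PosSemidef) :
    Real.sqrt (∑ i, ∑ j, (h i j) ^ 2) ≤ h.trace + ((n : ℝ) + Real.sqrt n) * C := by
  set B := h + C • (1 : Matrix (Fin n) (Fin n) ℝ) with hBdef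
  have hdiag : ∀ i, 0 ≤ B i i := by
    intro i
    have h2 := hpsd.dotProduct_mulVec_nonneg (Pi.single i 1)
    simpa using h2
  have htr : 0 ≤ B.trace := by
    rw [Matrix.trace]
    exact Finset.sum_nonneg fun i _ => hdiag i
  have hsum : ∑ i, ∑ j, (B i j) ^ 2 ≤ B.trace ^ 2 := by
    rw [Matrix.trace, sq, Finset.sum_mul_sum]
    exact Finset.sum_le_sum fun i _ => Finset.sum_le_sum fun j _ => entry_sq_le hpsd i j
  have hsqrtB : Real.sqrt (∑ i, ∑ j, (B i j) ^ 2) ≤ B.trace := by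
    calc Real.sqrt (∑ i, ∑ j, (B i j) ^ 2) ≤ Real.sqrt (B.trace ^ 2) :=
          Real.sqrt_le_sqrt hsum
      _ = B.trace := Real.sqrt_sq htr
  -- Minkowski in EuclideanSpace
  set u : EuclideanSpace ℝ (Fin n × Fin n) := WithLp.toLp 2 (fun p : Fin n × Fin n => B p.1 p.2) with hu
  set w : EuclideanSpace ℝ (Fin n × Fin n) := WithLp.toLp 2 (fun p : Fin n × Fin n => if p.1 = p.2 then C else 0) with hw
  have huw : u - w = WithLp.toLp 2 (fun p : Fin n × Fin n => h p.1 p.2) := by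
    ext p
    simp [hu, hw, hBdef, Matrix.add_apply, Matrix.smul_apply, Matrix.one_apply]
  have hnormuw : ‖u - w‖ = Real.sqrt (∑ i, ∑ j, (h i j) ^ 2) := by
    rw [EuclideanSpace.norm_eq, Fintype.sum_prod_type]
    congr 1
    refine Finset.sum_congr rfl fun p _ => ?_
    rw [huw]
    simp [sq_abs]
  have hnormu : ‖u‖ = Real.sqrt (∑ i, ∑ j, (B i j) ^ 2) := by
    rw [EuclideanSpace.norm_eq, Fintype.sum_prod_type]
    congr 1
    refine Finset.sum_congr rfl fun p _ => ?_
    simp [hu, sq_abs]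
  have hnormw : ‖w‖ = Real.sqrt n * C := by
    rw [EuclideanSpace.norm_eq]
    have : ∑ p : Fin n × Fin n, ‖w p‖ ^ 2 = (n : ℝ) * C ^ 2 := by
      rw [Fintype.sum_prod_type]
      simp only [hw]
      rw [Finset.sum_comm]
      simp [Finset.sum_ite_eq, apply_ite (fun x : ℝ => ‖x‖ ^ 2), sq_abs]
    rw [this, Real.sqrt_mul (Nat.cast_nonneg n), Real.sqrt_sq hC]
  have htri : ‖u - w‖ ≤ ‖u‖ + ‖w‖ := norm_sub_le u w
  rw [hnormuw, hnormu, hnormw] at htri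
  have htrB : B.trace = h.trace + (n : ℝ) * C := by
    rw [hBdef, Matrix.trace_add, Matrix.trace_smul, Matrix.trace_one]
    simp [mul_comm]
  nlinarith [htri, hsqrtB]
end

section
/- Let $T_0 > 0$, $c > 0$, $B \geq 0$, and let $u, v : [0, T_0] \to \mathbb{R}$ be continuous nonnegative functions with $u$ differentiable on $[0,T_0]$, satisfying $u'(t) \leq -c\, v(t) + B\, u(t)$ for all $t \in [0, T_0]$. Then for all $0 \leq \tau < \tau' \leq t \leq T_0$: $u(t) + c \int_{\tau'}^{t} v(s)\, ds \leq \left(B + \frac{1}{\tau' - \tau}\right) \int_{\tau}^{T_0} u(s)\, ds$. -/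
/-- Abstract form of inequality (11): if nonnegative continuous `u, v` on `[0, T₀]` satisfy
the differential inequality `u' ≤ -c v + B u`, then for `0 ≤ τ < τ' ≤ t ≤ T₀`,
`u(t) + c ∫_{τ'}^{t} v ≤ (B + 1/(τ'-τ)) ∫_{τ}^{T₀} u`. -/
theorem cutoff_integral_estimate (T₀ c B : ℝ) (hT₀ : 0 < T₀) (hc : 0 < c) (hB : 0 ≤ B)
    (u v u' : ℝ → ℝ)
    (hu_cont : ContinuousOn u (Set.Icc 0 T₀))
    (hv_cont : ContinuousOn v (Set.Icc 0 T₀))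
    (hu_nonneg : ∀ t ∈ Set.Icc (0 : ℝ) T₀, 0 ≤ u t)
    (hv_nonneg : ∀ t ∈ Set.Icc (0 : ℝ) T₀, 0 ≤ v t)
    (hu_deriv : ∀ t ∈ Set.Icc (0 : ℝ) T₀, HasDerivWithinAt u (u' t) (Set.Icc 0 T₀) t)
    (hineq : ∀ t ∈ Set.Icc (0 : ℝ) T₀, u' t ≤ -c * v t + B * u t) :
    ∀ τ τ' t : ℝ, 0 ≤ τ → τ < τ' → τ' ≤ t → t ≤ T₀ →
      u t + c * ∫ s in τ'..t, v s ≤ (B + 1 / (τ' - τ)) * ∫ s in τ..T₀, u s := by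
  intro τ τ' t hτ hττ' hτ't htT
  have hτT : τ ≤ T₀ := le_trans (le_trans hττ'.le hτ't) htT
  have hτ'0 : (0:ℝ) ≤ τ' := le_trans hτ hττ'.le
  have ht0 : (0:ℝ) ≤ t := le_trans hτ'0 hτ't
  have htmem : t ∈ Set.Icc (0:ℝ) T₀ := ⟨ht0, htT⟩
  have huIcc : Set.uIcc (0:ℝ) T₀ = Set.Icc 0 T₀ := Set.uIcc_of_le hT₀.le
  have hsub : ∀ a b : ℝ, a ∈ Set.Icc (0:ℝ) T₀ → b ∈ Set.Icc (0:ℝ) T₀ →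
      Set.uIcc a b ⊆ Set.Icc 0 T₀ := fun a b ha hb => Set.uIcc_subset_Icc ha hb
  have hu_int : ∀ a b : ℝ, a ∈ Set.Icc (0:ℝ) T₀ → b ∈ Set.Icc (0:ℝ) T₀ →
      IntervalIntegrable u MeasureTheory.volume a b := fun a b ha hb =>
    (hu_cont.mono (hsub a b ha hb)).intervalIntegrable
  have hv_int : ∀ a b : ℝ, a ∈ Set.Icc (0:ℝ) T₀ → b ∈ Set.Icc (0:ℝ) T₀ →
      IntervalIntegrable v MeasureTheory.volume a b := fun a b ha hb =>
    (hv_cont.mono (hsub a b ha hb)).intervalIntegrable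
  have h0T : (0:ℝ) ∈ Set.Icc (0:ℝ) T₀ := ⟨le_rfl, hT₀.le⟩
  have hT : T₀ ∈ Set.Icc (0:ℝ) T₀ := ⟨hT₀.le, le_rfl⟩
  -- key pointwise estimate
  have key : ∀ s ∈ Set.Icc τ τ',
      u t + c * ∫ x in s..t, v x ≤ u s + B * ∫ x in s..t, u x := by
    intro s hs
    have hsmem : s ∈ Set.Icc (0:ℝ) T₀ :=
      ⟨le_trans hτ hs.1, le_trans hs.2 (le_trans hτ't htT)⟩
    have hst : s ≤ t := le_trans hs.2 hτ't
    set g : ℝ → ℝ := fun x => u x + c * (∫ y in s..x, v y) - B * (∫ y in s..x, u y) with hgdef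
    have hgcont : ContinuousOn g (Set.Icc 0 T₀) := by
      apply ContinuousOn.sub
      · apply hu_cont.add
        apply continuousOn_const.mul
        have := intervalIntegral.continuousOn_primitive_interval'
          (μ := MeasureTheory.volume) (f := v) (hv_int 0 T₀ h0T hT) (by rw [huIcc]; exact hsmem)
        rwa [huIcc] at this
      · apply continuousOn_const.mul
        have := intervalIntegral.continuousOn_primitive_interval'
          (μ := MeasureTheory.volume) (f := u) (hu_int 0 T₀ h0T hT) (by rw [huIcc]; exact hsmem)
        rwa [huIcc] at this
    have hder : ∀ x ∈ Set.Ioo (0:ℝ) T₀, HasDerivAt g (u' x + c * v x - B * u x) x := by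
      intro x hx
      have hxmem : x ∈ Set.Icc (0:ℝ) T₀ := Set.mem_Icc_of_Ioo hx
      have hnhds : Set.Icc (0:ℝ) T₀ ∈ nhds x := Icc_mem_nhds hx.1 hx.2
      have h1 : HasDerivAt u (u' x) x := (hu_deriv x hxmem).hasDerivAt hnhds
      have hvmeas : StronglyMeasurableAtFilter v (nhds x) MeasureTheory.volume :=
        ContinuousOn.stronglyMeasurableAtFilter isOpen_Ioo (hv_cont.mono Set.Ioo_subset_Icc_self)
          x hx
      have humeas : StronglyMeasurableAtFilter u (nhds x) MeasureTheory.volume :=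
        ContinuousOn.stronglyMeasurableAtFilter isOpen_Ioo (hu_cont.mono Set.Ioo_subset_Icc_self)
          x hx
      have h2 : HasDerivAt (fun y => ∫ z in s..y, v z) (v x) x :=
        intervalIntegral.integral_hasDerivAt_right (hv_int s x hsmem hxmem) hvmeas
          (hv_cont.continuousAt hnhds)
      have h3 : HasDerivAt (fun y => ∫ z in s..y, u z) (u x) x :=
        intervalIntegral.integral_hasDerivAt_right (hu_int s x hsmem hxmem) humeas
          (hu_cont.continuousAt hnhds)
      exact (h1.add (h2.const_mul c)).sub (h3.const_mul B)
    have hganti : AntitoneOn g (Set.Icc 0 T₀) := by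
      apply antitoneOn_of_deriv_nonpos (convex_Icc 0 T₀) hgcont
      · intro x hx
        rw [interior_Icc] at hx
        exact (hder x hx).differentiableAt.differentiableWithinAt
      · intro x hx
        rw [interior_Icc] at hx
        rw [(hder x hx).deriv]
        have := hineq x (Set.mem_Icc_of_Ioo hx)
        nlinarith [this]
    have := hganti hsmem htmem hst
    simp only [hgdef, intervalIntegral.integral_same, mul_zero, add_zero, sub_zero] at this
    linarith
  -- nonnegativity of integrals of u, v over subintervals
  have int_nonneg : ∀ (f : ℝ → ℝ), (∀ x ∈ Set.Icc (0:ℝ) T₀, 0 ≤ f x) →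
      ∀ a b : ℝ, 0 ≤ a → a ≤ b → b ≤ T₀ → 0 ≤ ∫ x in a..b, f x := by
    intro f hf a b ha hab hb
    apply intervalIntegral.integral_nonneg hab
    intro x hx
    exact hf x ⟨le_trans ha hx.1, le_trans hx.2 hb⟩
  -- from key: u t + c ∫_{τ'}^t v ≤ u s + B ∫_τ^{T₀} u  for s ∈ [τ, τ']
  have key2 : ∀ s ∈ Set.Icc τ τ',
      u t + c * ∫ x in τ'..t, v x ≤ u s + B * ∫ x in τ..T₀, u x := by
    intro s hs
    have hsmem : s ∈ Set.Icc (0:ℝ) T₀ :=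
      ⟨le_trans hτ hs.1, le_trans hs.2 (le_trans hτ't htT)⟩
    have hsτ' : s ≤ τ' := hs.2
    have hs0 : (0:ℝ) ≤ s := hsmem.1
    -- ∫_{τ'}^t v ≤ ∫_s^t v
    have hv1 : (∫ x in τ'..t, v x) ≤ ∫ x in s..t, v x := by
      have hsplit : (∫ x in s..t, v x) = (∫ x in s..τ', v x) + ∫ x in τ'..t, v x :=
        (intervalIntegral.integral_add_adjacent_intervals (hv_int s τ' hsmem ⟨hτ'0, le_trans hτ't htT⟩)
          (hv_int τ' t ⟨hτ'0, le_trans hτ't htT⟩ htmem)).symm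
      have := int_nonneg v hv_nonneg s τ' hs0 hsτ' (le_trans hτ't htT)
      linarith
    -- ∫_s^t u ≤ ∫_τ^{T₀} u
    have hu1 : (∫ x in s..t, u x) ≤ ∫ x in τ..T₀, u x := by
      have h1 : (∫ x in τ..T₀, u x) = (∫ x in τ..s, u x) + ∫ x in s..T₀, u x :=
        (intervalIntegral.integral_add_adjacent_intervals (hu_int τ s ⟨hτ, hτT⟩ hsmem)
          (hu_int s T₀ hsmem hT)).symm
      have h2 : (∫ x in s..T₀, u x) = (∫ x in s..t, u x) + ∫ x in t..T₀, u x :=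
        (intervalIntegral.integral_add_adjacent_intervals (hu_int s t hsmem htmem)
          (hu_int t T₀ htmem hT)).symm
      have h3 := int_nonneg u hu_nonneg τ s hτ hs.1 hsmem.2
      have h4 := int_nonneg u hu_nonneg t T₀ ht0 htT le_rfl
      linarith
    have := key s hs
    nlinarith
  -- integrate key2 over s ∈ [τ, τ']
  have hint : (τ' - τ) * (u t + c * ∫ x in τ'..t, v x) ≤
      (∫ s in τ..τ', u s) + (τ' - τ) * (B * ∫ x in τ..T₀, u x) := by
    have h1 : (∫ _ in τ..τ', (u t + c * ∫ x in τ'..t, v x)) ≤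
        ∫ s in τ..τ', (u s + B * ∫ x in τ..T₀, u x) := by
      apply intervalIntegral.integral_mono_on hττ'.le
        intervalIntegrable_const
        ((hu_int τ τ' ⟨hτ, hτT⟩ ⟨hτ'0, le_trans hτ't htT⟩).add intervalIntegrable_const)
      intro s hs
      exact key2 s hs
    rw [intervalIntegral.integral_const, smul_eq_mul] at h1
    rw [intervalIntegral.integral_add (hu_int τ τ' ⟨hτ, hτT⟩ ⟨hτ'0, le_trans hτ't htT⟩)
      intervalIntegrable_const, intervalIntegral.integral_const, smul_eq_mul] at h1
    linarith
  -- ∫_τ^{τ'} u ≤ ∫_τ^{T₀} u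
  have hu2 : (∫ s in τ..τ', u s) ≤ ∫ s in τ..T₀, u s := by
    have h1 : (∫ x in τ..T₀, u x) = (∫ x in τ..τ', u x) + ∫ x in τ'..T₀, u x :=
      (intervalIntegral.integral_add_adjacent_intervals
        (hu_int τ τ' ⟨hτ, hτT⟩ ⟨hτ'0, le_trans hτ't htT⟩)
        (hu_int τ' T₀ ⟨hτ'0, le_trans hτ't htT⟩ hT)).symm
    have h2 := int_nonneg u hu_nonneg τ' T₀ hτ'0 (le_trans hτ't htT) le_rfl
    linarith
  -- conclude
  have hpos : 0 < τ' - τ := sub_pos.mpr hττ'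
  have hne : (τ' - τ) ≠ 0 := ne_of_gt hpos
  have hall : (τ' - τ) * (u t + c * ∫ s in τ'..t, v s) ≤
      (∫ s in τ..T₀, u s) + (τ' - τ) * (B * ∫ s in τ..T₀, u s) := by linarith
  have h2 := mul_le_mul_of_nonneg_left hall (inv_pos.mpr hpos).le
  rw [← mul_assoc, inv_mul_cancel₀ hne, one_mul, mul_add, ← mul_assoc,
    inv_mul_cancel₀ hne, one_mul] at h2
  rw [add_mul, div_mul_eq_mul_div, one_mul, div_eq_inv_mul]
  linarith
end

section
/- Let $n \geq 3$ be an integer, $\mu = 1 + \frac{2}{n}$, $p_k = \frac{n+2}{2}\mu^k$ for $k \geq 0$. Fix $T_0 > 0$, $t \in (0, T_0]$, and set $\tau_k = \left(1 - \mu^{-(k+1)}\right) t$. Let $\beta \geq 0$, $D \geq 1$, and let $L : \mathbb{R} \times \mathbb{R} \to [0, \infty)$ be a function satisfying, for every $k \geq 0$, $L(p_{k+1}, \tau_{k+1}) \leq D^2 \left(\beta p_k + \frac{1}{\tau_{k+1} - \tau_k}\right)^{1 + \frac{2}{n}} L(p_k, \tau_k)^{1 + \frac{2}{n}}$. Then there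 exists a constant $c$ depending only on $n$ such that for every $k \geq 1$: $L(p_k, \tau_k)^{1/p_k} \leq c\, D^{\frac{2n}{n+2}} \left(1 + \beta + \frac{1}{t}\right) L(p_0, \tau_0)^{\frac{2}{n+2}}$. -/
open Real

private def mA (μ : ℝ) : ℕ → ℝ
  | 0 => 0
  | k + 1 => μ * mA μ k + 1

private def mB (μ : ℝ) : ℕ → ℝ
  | 0 => 0
  | k + 1 => μ * mB μ k + (k : ℝ) * μ

set_option maxHeartbeats 1000000 in
/-- Abstract Moser iteration underlying Theorem 3.3: if `L` satisfies the recursive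
inequality (12) along `p_k = ((n+2)/2)(1+2/n)^k` and `τ_k = (1 - μ^{-(k+1)}) t`, then
there is a constant `c = c(n)` such that
`L(p_k, τ_k)^{1/p_k} ≤ c D^{2n/(n+2)} (1 + β + 1/t) L(p₀, τ₀)^{2/(n+2)}` for all `k ≥ 1`. -/
theorem abstract_moser_iteration (n : ℕ) (hn : 3 ≤ n) :
    ∃ c : ℝ, 0 < c ∧
      ∀ (μ : ℝ), μ = 1 + 2 / (n : ℝ) →
      ∀ (p : ℕ → ℝ), (∀ k : ℕ, p k = ((n : ℝ) + 2) / 2 * μ ^ k) →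
      ∀ (T₀ t : ℝ), 0 < T₀ → t ∈ Set.Ioc 0 T₀ →
      ∀ (τ : ℕ → ℝ), (∀ k : ℕ, τ k = (1 - μ ^ (-(k + 1 : ℤ))) * t) →
      ∀ (β D : ℝ), 0 ≤ β → 1 ≤ D →
      ∀ (L : ℝ → ℝ → ℝ), (∀ a b, 0 ≤ L a b) →
      (∀ k : ℕ, L (p (k + 1)) (τ (k + 1)) ≤
          D ^ 2 * (β * p k + 1 / (τ (k + 1) - τ k)) ^ (1 + 2 / (n : ℝ)) *
            L (p k) (τ k) ^ (1 + 2 / (n : ℝ))) →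
      ∀ k : ℕ, 1 ≤ k →
        L (p k) (τ k) ^ (1 / p k) ≤
          c * D ^ (2 * (n : ℝ) / ((n : ℝ) + 2)) * (1 + β + 1 / t) *
            L (p 0) (τ 0) ^ (2 / ((n : ℝ) + 2)) := by
  have hn3 : (3 : ℝ) ≤ (n : ℝ) := by exact_mod_cast hn
  have hnpos : (0 : ℝ) < (n : ℝ) := by linarith
  refine ⟨(1 + 2 / (n : ℝ)) ^ ((n : ℝ) / 2) * (1 + ((n : ℝ) + 2) ^ 2), ?_, ?_⟩
  · have : (0:ℝ) < 1 + 2 / (n : ℝ) := by positivity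
    positivity
  intro μ hμ p hp T₀ t hT₀ ht τ hτ β D hβ hD L hL hrec k hk
  have htpos : 0 < t := ht.1
  have hμ1 : 1 < μ := by rw [hμ]; have : 0 < 2 / (n:ℝ) := by positivity
                         linarith
  have hμ0 : (0:ℝ) < μ := by linarith
  -- constants
  set A : ℝ := β * (((n:ℝ) + 2) / 2) + μ ^ 2 * (n:ℝ) / (2 * t) with hA
  have hApos : 0 < A := by
    have h1 : 0 < μ ^ 2 * (n:ℝ) / (2 * t) := by positivity
    have h2 : 0 ≤ β * (((n:ℝ) + 2) / 2) := by positivity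
    rw [hA]; linarith
  set C : ℝ := D ^ 2 * A ^ μ with hC
  have hCpos : 0 < C := by
    have hD0 : (0:ℝ) < D := by linarith
    have : (0:ℝ) < A ^ μ := rpow_pos_of_pos hApos μ
    positivity
  set C' : ℝ := max 1 C with hC'
  have hC'1 : 1 ≤ C' := le_max_left 1 C
  have hC'0 : (0:ℝ) < C' := by linarith
  -- the base identity
  have hbase : ∀ j : ℕ, β * p j + 1 / (τ (j + 1) - τ j) = μ ^ j * A := by
    intro j
    have hzp : ∀ m : ℕ, μ ^ (-(m : ℤ) - 1) = (μ ^ (m + 1) : ℝ)⁻¹ := by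
      intro m
      rw [show (-(m : ℤ) - 1) = -((m + 1 : ℕ) : ℤ) by push_cast; ring,
        zpow_neg, zpow_natCast]
    have h1 : τ j = (1 - (μ ^ (j + 1))⁻¹) * t := by
      rw [hτ j, show (-((j:ℤ) + 1)) = -(j:ℤ) - 1 from by ring, hzp j]
    have h2 : τ (j+1) = (1 - (μ ^ (j + 2))⁻¹) * t := by
      rw [hτ (j+1), show -((((j+1:ℕ)):ℤ) + 1) = -(((j+1:ℕ)):ℤ) - 1 from by ring, hzp (j+1)]
    have hdiff : τ (j + 1) - τ j = 2 * t / ((n:ℝ) * μ ^ (j + 2)) := by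
      rw [h1, h2]
      have hpow : (0:ℝ) < μ ^ (j+2) := pow_pos hμ0 _
      have hpow1 : (0:ℝ) < μ ^ (j+1) := pow_pos hμ0 _
      field_simp
      rw [hμ]
      ring_nf
      field_simp
      ring
    rw [hdiff, hp j, hA]
    have hpow : (0:ℝ) < μ ^ (j+2) := pow_pos hμ0 _
    have hpj : μ ^ (j + 2) = μ ^ j * μ ^ 2 := by ring
    field_simp
    ring
  have hL0nn : 0 ≤ L (p 0) (τ 0) := hL _ _
  -- main iteration
  have key : ∀ j : ℕ, L (p j) (τ j) ≤
      C' ^ (mA μ j) * μ ^ (mB μ j) * L (p 0) (τ 0) ^ ((μ ^ j : ℝ)) := by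
    intro j
    induction j with
    | zero => simp [mA, mB]
    | succ j ih =>
      have e1 : (μ ^ j * A) ^ μ = μ ^ ((j:ℝ) * μ) * A ^ μ := by
        rw [Real.mul_rpow (by positivity) hApos.le, ← Real.rpow_natCast μ j,
          ← Real.rpow_mul hμ0.le]
      have e2 : (C' ^ (mA μ j) * μ ^ (mB μ j) * L (p 0) (τ 0) ^ ((μ ^ j : ℝ))) ^ μ
          = C' ^ (mA μ j * μ) * μ ^ (mB μ j * μ) * L (p 0) (τ 0) ^ ((μ ^ (j+1) : ℝ)) := by
        rw [Real.mul_rpow (by positivity) (Real.rpow_nonneg hL0nn _),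
          Real.mul_rpow (by positivity) (by positivity),
          ← Real.rpow_mul hC'0.le, ← Real.rpow_mul hμ0.le, ← Real.rpow_mul hL0nn,
          ← pow_succ]
      calc L (p (j+1)) (τ (j+1))
          ≤ D ^ 2 * (β * p j + 1 / (τ (j + 1) - τ j)) ^ (1 + 2 / (n : ℝ)) *
              L (p j) (τ j) ^ (1 + 2 / (n:ℝ)) := hrec j
        _ = D ^ 2 * (μ ^ j * A) ^ μ * L (p j) (τ j) ^ μ := by rw [hbase j, ← hμ]
        _ ≤ D ^ 2 * (μ ^ j * A) ^ μ *
              (C' ^ (mA μ j) * μ ^ (mB μ j) * L (p 0) (τ 0) ^ ((μ ^ j : ℝ))) ^ μ := by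
            have h3 := Real.rpow_le_rpow (hL (p j) (τ j)) ih hμ0.le
            have hfac : (0:ℝ) ≤ D ^ 2 * (μ ^ j * A) ^ μ := by positivity
            exact mul_le_mul_of_nonneg_left h3 hfac
        _ = C * C' ^ (mA μ j * μ) * (μ ^ ((j:ℝ) * μ) * μ ^ (mB μ j * μ)) *
              L (p 0) (τ 0) ^ ((μ ^ (j+1) : ℝ)) := by
            rw [e1, e2, hC]; ring
        _ ≤ C' * C' ^ (mA μ j * μ) * (μ ^ ((j:ℝ) * μ) * μ ^ (mB μ j * μ)) *
              L (p 0) (τ 0) ^ ((μ ^ (j+1) : ℝ)) := by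
            gcongr
            exact le_max_right 1 C
        _ = C' ^ (mA μ (j+1)) * μ ^ (mB μ (j+1)) * L (p 0) (τ 0) ^ ((μ ^ (j+1) : ℝ)) := by
            simp only [mA, mB]
            rw [Real.rpow_add hC'0, Real.rpow_add hμ0, Real.rpow_one,
              mul_comm μ (mA μ j), mul_comm μ (mB μ j)]
            ring
  -- bounds on the exponent sequences
  have hmA : ∀ j : ℕ, mA μ j ≤ (n:ℝ)/2 * (μ ^ j - 1) := by
    intro j
    induction j with
    | zero => simp [mA]
    | succ j ih =>
      have hid : μ * ((n:ℝ)/2) = (n:ℝ)/2 + 1 := by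
        rw [hμ]; field_simp
      calc mA μ (j+1) = μ * mA μ j + 1 := rfl
        _ ≤ μ * ((n:ℝ)/2 * (μ ^ j - 1)) + 1 := by
            have := mul_le_mul_of_nonneg_left ih hμ0.le
            linarith
        _ = (n:ℝ)/2 * (μ ^ (j+1) - 1) := by linear_combination -hid
  have hmB : ∀ j : ℕ, mB μ j ≤ (n:ℝ)*((n:ℝ)+2)/4 * μ ^ j
      - ((n:ℝ)+2)/2 * ((j:ℝ) + (n:ℝ)/2) := by
    intro j
    induction j with
    | zero => simp [mB]; nlinarith
    | succ j ih =>
      have hid : μ * (((n:ℝ)+2)/2) * ((j:ℝ) + (n:ℝ)/2)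
          = (j:ℝ)*μ + ((n:ℝ)+2)/2 * ((j:ℝ) + 1 + (n:ℝ)/2) := by
        rw [hμ]; field_simp; ring
      calc mB μ (j+1) = μ * mB μ j + (j:ℝ) * μ := rfl
        _ ≤ μ * ((n:ℝ)*((n:ℝ)+2)/4 * μ ^ j - ((n:ℝ)+2)/2 * ((j:ℝ) + (n:ℝ)/2))
              + (j:ℝ) * μ := by
            have := mul_le_mul_of_nonneg_left ih hμ0.le
            linarith
        _ = (n:ℝ)*((n:ℝ)+2)/4 * μ ^ (j+1)
              - ((n:ℝ)+2)/2 * (((j:ℕ):ℝ) + 1 + (n:ℝ)/2) := by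
            linear_combination -hid
        _ = (n:ℝ)*((n:ℝ)+2)/4 * μ ^ (j+1)
              - ((n:ℝ)+2)/2 * ((((j+1):ℕ):ℝ) + (n:ℝ)/2) := by push_cast; ring
  -- final assembly
  have hpk : p k = ((n:ℝ)+2)/2 * μ ^ k := hp k
  have hμkpos : (0:ℝ) < μ ^ k := pow_pos hμ0 k
  have hpkpos : 0 < p k := by rw [hpk]; positivity
  have hμkne : (μ:ℝ) ^ k ≠ 0 := ne_of_gt hμkpos
  have hn2 : ((n:ℝ) + 2) ≠ 0 := by linarith
  have hμk : μ ^ k * (1 / p k) = 2 / ((n:ℝ)+2) := by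
    rw [hpk]; field_simp
  have hE1 : mA μ k * (1 / p k) ≤ (n:ℝ)/((n:ℝ)+2) := by
    rw [hpk, mul_one_div, div_le_iff₀ (by positivity)]
    have h2 : (n:ℝ)/((n:ℝ)+2) * (((n:ℝ)+2)/2 * μ ^ k) = (n:ℝ)/2 * μ ^ k := by
      field_simp
    rw [h2]
    nlinarith [hmA k, hμkpos, hn3]
  have hE2 : mB μ k * (1 / p k) ≤ (n:ℝ)/2 := by
    rw [hpk, mul_one_div, div_le_iff₀ (by positivity)]
    have h2 : (n:ℝ)/2 * (((n:ℝ)+2)/2 * μ ^ k) = (n:ℝ)*((n:ℝ)+2)/4 * μ ^ k := by ring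
    rw [h2]
    have hknn : (0:ℝ) ≤ (k:ℝ) := Nat.cast_nonneg k
    nlinarith [hmB k, hn3]
  have hDnn : (0:ℝ) ≤ D := by linarith
  have hD1 : 1 ≤ D ^ (2*(n:ℝ)/((n:ℝ)+2)) := by
    rw [show (1:ℝ) = D ^ (0:ℝ) from (Real.rpow_zero D).symm]
    exact Real.rpow_le_rpow_of_exponent_le hD (by positivity)
  have h1t : (0:ℝ) < 1/t := by positivity
  have h1βt : 1 ≤ 1 + β + 1/t := by linarith
  have hμ2 : μ ≤ 2 := by
    rw [hμ]
    have : 2/(n:ℝ) ≤ 1 := by rw [div_le_one hnpos]; linarith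
    linarith
  have hCe : C ^ ((n:ℝ)/((n:ℝ)+2)) = D ^ (2*(n:ℝ)/((n:ℝ)+2)) * A := by
    rw [hC, Real.mul_rpow (by positivity) (Real.rpow_pos_of_pos hApos μ).le,
      ← Real.rpow_natCast D 2, ← Real.rpow_mul hDnn, ← Real.rpow_mul hApos.le,
      show (μ * ((n:ℝ)/((n:ℝ)+2))) = 1 by rw [hμ]; field_simp,
      Real.rpow_one]
    norm_num
    left
    ring
  have hAle : A ≤ ((n:ℝ)+2)^2 * (1 + β + 1/t) := by
    have hrwA : A = β * (((n:ℝ)+2)/2) + (μ^2*(n:ℝ)/2) * (1/t) := by rw [hA]; ring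
    rw [hrwA]
    have hb2 : (0:ℝ) ≤ ((n:ℝ)+2)^2 - ((n:ℝ)+2)/2 := by nlinarith
    have hμsq : μ^2 ≤ 4 := by nlinarith [hμ2, hμ0.le]
    have hb3 : (0:ℝ) ≤ ((n:ℝ)+2)^2 - μ^2*(n:ℝ)/2 := by nlinarith [hμsq, hn3]
    nlinarith [mul_nonneg hβ hb2, mul_nonneg h1t.le hb3]
  have hC'le : C' ^ ((n:ℝ)/((n:ℝ)+2)) ≤
      (1 + ((n:ℝ)+2)^2) * (D ^ (2*(n:ℝ)/((n:ℝ)+2)) * (1 + β + 1/t)) := by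
    have hup : C' ^ ((n:ℝ)/((n:ℝ)+2)) ≤ 1 + C ^ ((n:ℝ)/((n:ℝ)+2)) := by
      rcases le_or_gt C 1 with h | h
      · rw [hC', max_eq_left h, Real.one_rpow]
        have := Real.rpow_nonneg hCpos.le ((n:ℝ)/((n:ℝ)+2))
        linarith
      · rw [hC', max_eq_right h.le]
        linarith
    have h5 : C ^ ((n:ℝ)/((n:ℝ)+2)) ≤
        D ^ (2*(n:ℝ)/((n:ℝ)+2)) * (((n:ℝ)+2)^2 * (1 + β + 1/t)) := by
      rw [hCe]
      have hDe : (0:ℝ) ≤ D ^ (2*(n:ℝ)/((n:ℝ)+2)) := by positivity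
      nlinarith [mul_le_mul_of_nonneg_left hAle hDe]
    have h6 : 1 ≤ D ^ (2*(n:ℝ)/((n:ℝ)+2)) * (1 + β + 1/t) := by
      nlinarith [hD1, h1βt]
    calc C' ^ ((n:ℝ)/((n:ℝ)+2)) ≤ 1 + C ^ ((n:ℝ)/((n:ℝ)+2)) := hup
      _ ≤ 1 + D ^ (2*(n:ℝ)/((n:ℝ)+2)) * (((n:ℝ)+2)^2 * (1 + β + 1/t)) := by linarith [h5]
      _ = 1 + ((n:ℝ)+2)^2 * (D ^ (2*(n:ℝ)/((n:ℝ)+2)) * (1 + β + 1/t)) := by ring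
      _ ≤ (1 + ((n:ℝ)+2)^2) * (D ^ (2*(n:ℝ)/((n:ℝ)+2)) * (1 + β + 1/t)) := by
          have hexp : (1 + ((n:ℝ)+2)^2) * (D ^ (2*(n:ℝ)/((n:ℝ)+2)) * (1 + β + 1/t))
              = D ^ (2*(n:ℝ)/((n:ℝ)+2)) * (1 + β + 1/t)
                + ((n:ℝ)+2)^2 * (D ^ (2*(n:ℝ)/((n:ℝ)+2)) * (1 + β + 1/t)) := by ring
          rw [hexp]
          linarith [h6]
  -- put everything together
  have hstep1 := Real.rpow_le_rpow (hL (p k) (τ k)) (key k) (by positivity : (0:ℝ) ≤ 1 / p k)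
  have hexpand : (C' ^ (mA μ k) * μ ^ (mB μ k) * L (p 0) (τ 0) ^ ((μ ^ k : ℝ))) ^ (1 / p k)
      = C' ^ (mA μ k * (1 / p k)) * μ ^ (mB μ k * (1 / p k)) *
        L (p 0) (τ 0) ^ (2 / ((n:ℝ)+2)) := by
    rw [Real.mul_rpow (by positivity) (Real.rpow_nonneg hL0nn _),
      Real.mul_rpow (by positivity) (by positivity),
      ← Real.rpow_mul hC'0.le, ← Real.rpow_mul hμ0.le, ← Real.rpow_mul hL0nn, hμk]
  have hLX : (0:ℝ) ≤ L (p 0) (τ 0) ^ (2 / ((n:ℝ)+2)) := Real.rpow_nonneg hL0nn _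
  calc L (p k) (τ k) ^ (1 / p k)
      ≤ C' ^ (mA μ k * (1 / p k)) * μ ^ (mB μ k * (1 / p k)) *
          L (p 0) (τ 0) ^ (2 / ((n:ℝ)+2)) := by rw [← hexpand]; exact hstep1
    _ ≤ C' ^ ((n:ℝ)/((n:ℝ)+2)) * μ ^ ((n:ℝ)/2) *
          L (p 0) (τ 0) ^ (2 / ((n:ℝ)+2)) := by
        gcongr
        all_goals first | exact hC'1 | exact hμ1.le | exact hE1 | exact hE2
    _ ≤ ((1 + ((n:ℝ)+2)^2) * (D ^ (2*(n:ℝ)/((n:ℝ)+2)) * (1 + β + 1/t))) * μ ^ ((n:ℝ)/2) *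
          L (p 0) (τ 0) ^ (2 / ((n:ℝ)+2)) := by
        gcongr
    _ = (1 + 2 / (n : ℝ)) ^ ((n : ℝ) / 2) * (1 + ((n : ℝ) + 2) ^ 2) *
          D ^ (2 * (n : ℝ) / ((n : ℝ) + 2)) * (1 + β + 1 / t) *
          L (p 0) (τ 0) ^ (2 / ((n:ℝ)+2)) := by
        rw [← hμ]; ring
end
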